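/- Let T > 0, let a, b, b̃, r, P : [0,T] → ℝ be continuous, and let l, x ∈ ℝ. Suppose Γ, Λ, X : [0,T] → ℝ are differentiable and satisfy: Γ'(t) + 2[a(t) − P(t)(b(t)+b̃(t))b(t)]Γ(t) − (b(t)+b̃(t))b(t)Γ(t)² − b(t)b̃(t)P(t)² = 0 with Γ(T) = 0; Λ'(t) + [a(t) − (P(t)+Γ(t))(b(t)+b̃(t))b(t)]Λ(t) + (P(t)+Γ(t))(b(t)+b̃(t))r(t) = 0 with Λ(T) = −l; and X'(t) = [a(t) − (P(t)+Γ(t))(b(t)+b̃(t))b(t)]X(t) − (b(t)+b̃(t))(b(t)Λ(t) − r(t)) with X(0) = x. Then the function ψ(t) := Γ(t)X(t) + Λ(t) satisfies ψ(T) = −l and, together with X, solves the scalar consistency condition system of Problem (LCMP): X'(t) = [a(t) − b(t)(b(t)+b̃(t))P(t)]X(t) − b(t)(b(t)+b̃(t))ψ(t) + (b(t)+b̃(t))r(t) with X(0) = x, and ψ'(t) = −[a(t) − b(t)(b(t)+b̃(t))P(t)]ψ(t) + b(t)b̃(t)P(t)²X(t) − P(t)(b(t)+b̃(t))r(t). (Decoupling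 of the consistency condition system in the cash management example via the ansatz ψ = ΓX + Λ.) -/
import Mathlib


open Set

/-- Decoupling of the scalar consistency condition system of the cash management example
(Section 4) via the ansatz `ψ = ΓX + Λ`: if `Γ`, `Λ`, `X` solve the decoupled ODEs
  Γ' + 2[a − P(b+b̃)b]Γ − (b+b̃)bΓ² − bb̃P² = 0,  Γ(T) = 0,
  Λ' + [a − (P+Γ)(b+b̃)b]Λ + (P+Γ)(b+b̃)r = 0,   Λ(T) = −l,
  X' = [a − (P+Γ)(b+b̃)b]X − (b+b̃)(bΛ − r),      X(0) = x,
then `ψ := ΓX + Λ` satisfies `ψ(T) = −l` and `(X, ψ)` solves the scalar consistency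
condition system of Problem (LCMP):
  X' = [a − b(b+b̃)P]X − b(b+b̃)ψ + (b+b̃)r,       X(0) = x,
  ψ' = −[a − b(b+b̃)P]ψ + bb̃P²X − P(b+b̃)r. -/
theorem cc_decoupling_cash_management {T : ℝ} (hT : 0 < T)
    (a b btilde r P : ℝ → ℝ)
    (ha : ContinuousOn a (Set.Icc 0 T)) (hb : ContinuousOn b (Set.Icc 0 T))
    (hbtilde : ContinuousOn btilde (Set.Icc 0 T))
    (hr : ContinuousOn r (Set.Icc 0 T)) (hP : ContinuousOn P (Set.Icc 0 T))
    (l x : ℝ)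
    (Γ Λ X : ℝ → ℝ) (dΓ dΛ dX : ℝ → ℝ)
    (hΓderiv : ∀ t ∈ Set.Icc (0 : ℝ) T, HasDerivAt Γ (dΓ t) t)
    (hΓeq : ∀ t ∈ Set.Icc (0 : ℝ) T,
      dΓ t + 2 * (a t - P t * (b t + btilde t) * b t) * Γ t
        - (b t + btilde t) * b t * (Γ t) ^ 2 - b t * btilde t * (P t) ^ 2 = 0)
    (hΓT : Γ T = 0)
    (hΛderiv : ∀ t ∈ Set.Icc (0 : ℝ) T, HasDerivAt Λ (dΛ t) t)
    (hΛeq : ∀ t ∈ Set.Icc (0 : ℝ) T,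
      dΛ t + (a t - (P t + Γ t) * (b t + btilde t) * b t) * Λ t
        + (P t + Γ t) * (b t + btilde t) * r t = 0)
    (hΛT : Λ T = -l)
    (hXderiv : ∀ t ∈ Set.Icc (0 : ℝ) T, HasDerivAt X (dX t) t)
    (hXeq : ∀ t ∈ Set.Icc (0 : ℝ) T,
      dX t = (a t - (P t + Γ t) * (b t + btilde t) * b t) * X t
        - (b t + btilde t) * (b t * Λ t - r t))
    (hX0 : X 0 = x) :
    (fun t => Γ t * X t + Λ t) T = -l ∧
    X 0 = x ∧
    (∀ t ∈ Set.Icc (0 : ℝ) T,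
      HasDerivAt X
        ((a t - b t * (b t + btilde t) * P t) * X t
          - b t * (b t + btilde t) * (Γ t * X t + Λ t)
          + (b t + btilde t) * r t) t) ∧
    (∀ t ∈ Set.Icc (0 : ℝ) T,
      HasDerivAt (fun s => Γ s * X s + Λ s)
        (-(a t - b t * (b t + btilde t) * P t) * (Γ t * X t + Λ t)
          + b t * btilde t * (P t) ^ 2 * X t
          - P t * (b t + btilde t) * r t) t) := by
  refine ⟨by simp [hΓT, hΛT], hX0, ?_, ?_⟩
  · intro t ht
    have h := hXderiv t ht
    have heq := hXeq t ht
    have : (a t - b t * (b t + btilde t) * P t) * X t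
          - b t * (b t + btilde t) * (Γ t * X t + Λ t)
          + (b t + btilde t) * r t = dX t := by rw [heq]; ring
    rw [this]; exact h
  · intro t ht
    have h := ((hΓderiv t ht).mul (hXderiv t ht)).add (hΛderiv t ht)
    have hGe := hΓeq t ht
    have hLe := hΛeq t ht
    have hXe := hXeq t ht
    have : -(a t - b t * (b t + btilde t) * P t) * (Γ t * X t + Λ t)
          + b t * btilde t * (P t) ^ 2 * X t
          - P t * (b t + btilde t) * r t = dΓ t * X t + Γ t * dX t + dΛ t := by
      rw [hXe]; linear_combination (-(X t)) * hGe - hLe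
    rw [this]; exact h
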